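/- Let G be a finite simple graph that is C_3-free and C_5-free, let R be a minimal redundant set of G, and let x ∈ red(R). If y ∈ R is adjacent to x and N(y) ≠ {x}, then at most one of the following holds: (i) R ∩ (N(y) \ {x}) ≠ ∅; (ii) R ∩ (N(x) \ {y}) ≠ ∅. Moreover, if y ∈ red(R), then exactly one of (i) and (ii) holds. -/

import Mathlib

open Set SimpleGraph

variable {V : Type*}

/-- The closed neighborhood `N[v]` of a vertex. -/
def closedNbr (G : SimpleGraph V) (v : V) : Set V := insert v (G.neighborSet v)

/-- Private neighbors of `x` with respect to `I`. -/
def privSet (G : SimpleGraph V) (x : V) (I : Set V) : Set V :=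
  {y ∈ closedNbr G x | closedNbr G y ∩ I = {x}}

/-- A set is irredundant if every element has a private neighbor. -/
def Irred (G : SimpleGraph V) (I : Set V) : Prop := ∀ x ∈ I, (privSet G x I).Nonempty

/-- A maximal irredundant set. -/
def MaxIrred (G : SimpleGraph V) (I : Set V) : Prop :=
  Irred G I ∧ ∀ J : Set V, Irred G J → I ⊆ J → J = I

def Redundant (G : SimpleGraph V) (R : Set V) : Prop := ¬ Irred G R

def MinRedundant (G : SimpleGraph V) (R : Set V) : Prop :=
  Redundant G R ∧ ∀ S : Set V, S ⊂ R → ¬ Redundant G S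

/-- The set of redundant vertices of a set. -/
def redVerts (G : SimpleGraph V) (R : Set V) : Set V := {x ∈ R | privSet G x R = ∅}

def Dominating (G : SimpleGraph V) (D : Set V) : Prop := ∀ v : V, ∃ d ∈ D, v ∈ closedNbr G d

def MinDominating (G : SimpleGraph V) (D : Set V) : Prop :=
  Dominating G D ∧ ∀ S : Set V, S ⊂ D → ¬ Dominating G S

/-- Vertices at distance at most 2 from `x`. -/
def ball2 (G : SimpleGraph V) (x : V) : Set V :=
  {y | y = x ∨ G.Adj x y ∨ ∃ w, G.Adj x w ∧ G.Adj w y}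

/-- Vertices at distance exactly 2 from `x`. -/
def sphere2 (G : SimpleGraph V) (x : V) : Set V :=
  {y | y ≠ x ∧ ¬ G.Adj x y ∧ ∃ w, G.Adj x w ∧ G.Adj w y}

/-- `G` contains no induced cycle of length `k`. -/
def CFree (G : SimpleGraph V) (k : ℕ) : Prop :=
  IsEmpty (SimpleGraph.cycleGraph k ↪g G)

/-- `S` dominates `B` through open neighborhoods. -/
def DomOver (G : SimpleGraph V) (S B : Set V) : Prop := ∀ b ∈ B, ∃ s ∈ S, G.Adj s b

def MinDomOver (G : SimpleGraph V) (S B : Set V) : Prop :=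
  DomOver G S B ∧ ∀ S' : Set V, S' ⊂ S → ¬ DomOver G S' B

/-- `N(Y)`, the union of open neighborhoods of elements of `Y`. -/
def nbrUnion (G : SimpleGraph V) (Y : Set V) : Set V := ⋃ y ∈ Y, G.neighborSet y

/-- Private edges of `x` with respect to `I` in a hypergraph. -/
def hypPriv (H : Set (Set V)) (x : V) (I : Set V) : Set (Set V) := {E ∈ H | E ∩ I = {x}}

def HypIrred (H : Set (Set V)) (I : Set V) : Prop := ∀ x ∈ I, (hypPriv H x I).Nonempty

def HypMaxIrred (H : Set (Set V)) (I : Set V) : Prop :=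
  HypIrred H I ∧ ∀ J : Set V, HypIrred H J → I ⊆ J → J = I

/-- The trace of a hypergraph on a set `S`. -/
def htrace (H : Set (Set V)) (S : Set V) : Set (Set V) :=
  {F | ∃ E ∈ H, F = E ∩ S ∧ (E ∩ S).Nonempty}

/-- The closed-neighborhood hypergraph of a graph. -/
def nbrHyp (G : SimpleGraph V) : Set (Set V) := Set.range (closedNbr G)

/-- The first `i` vertices in the ordering `v` (zero-based: `v 0, …, v (i-1)`). -/
def firstVerts (v : ℕ → V) (i : ℕ) : Set V := {x | ∃ j < i, v j = x}

/-- The incidence co-bipartite graph of the closed-neighborhood hypergraph of `G`: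
`Sum.inl` is the vertex side `V`, `Sum.inr` is the copy `U`. -/
def cobip (G : SimpleGraph V) : SimpleGraph (V ⊕ V) :=
  SimpleGraph.fromRel (fun a b => match a, b with
    | Sum.inl _, Sum.inl _ => True
    | Sum.inr _, Sum.inr _ => True
    | Sum.inl a, Sum.inr b => a = b ∨ G.Adj a b
    | Sum.inr _, Sum.inl _ => False)

/-!
Removing any `r ≠ x` from a minimal redundant set `R` makes it irredundant, so a redundant `x`
regains a private neighbour `u`; since `u` was not private for `x` in `R`, `N[u] ∩ R = {x, r}`.
Taking `r = y` forces `N[x] ∩ R = {x, y}` or `N[y] ∩ R = {x, y}`, as otherwise `x u y` is a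
triangle. If both hold and `y` is redundant too, a neighbour `z ≠ x` of `y` sees some `w ∈ R`
other than `x, y`, and the two vertices `u, v` with `N[u] ∩ R = {x, w}`, `N[v] ∩ R = {y, w}`
close the induced pentagon `x u w v y`.
-/

section

variable {G : SimpleGraph V} {R : Set V} {u v w x y : V}

lemma mem_closedNbr : u ∈ closedNbr G v ↔ u = v ∨ G.Adj v u := by
  simp [closedNbr]

lemma mem_closedNbr_of_adj (h : G.Adj v u) : u ∈ closedNbr G v :=
  mem_closedNbr.2 (Or.inr h)

lemma mem_closedNbr_comm : u ∈ closedNbr G v ↔ v ∈ closedNbr G u := by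
  simp only [mem_closedNbr, eq_comm, G.adj_comm]

lemma adj_of_mem_closedNbr_of_ne (h : u ∈ closedNbr G v) (hne : u ≠ v) : G.Adj v u :=
  (mem_closedNbr.1 h).resolve_left hne

lemma mem_iff_of_inter_eq {α : Type*} {s t S : Set α} {a : α} (h : s ∩ t = S) (ha : a ∈ t) :
    a ∈ s ↔ a ∈ S := by
  rw [← h]; exact ⟨fun hs => ⟨hs, ha⟩, And.left⟩

lemma mem_of_inter_eq {α : Type*} {s t S : Set α} {a : α} (h : s ∩ t = S) (ha : a ∈ S) :
    a ∈ s :=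
  (h ▸ ha : a ∈ s ∩ t).1

lemma CFree.false_of_triangle (h3 : CFree G 3) {a b c : V}
    (hab : G.Adj a b) (hbc : G.Adj b c) (hca : G.Adj c a) : False := by
  have := hab.ne; have := hbc.ne; have := hca.ne
  refine h3.false ⟨⟨![a, b, c], ?_⟩, ?_⟩
  · intro i j h
    fin_cases i <;> fin_cases j <;> simp_all
  · intro i j
    show G.Adj (![a, b, c] i) (![a, b, c] j) ↔ _
    fin_cases i <;> fin_cases j <;>
      simp [hab, hbc, hca, hab.symm, hbc.symm, hca.symm] <;> decide

lemma CFree.false_of_pentagon (h5 : CFree G 5) {a b c d e : V}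
    (hab : G.Adj a b) (hbc : G.Adj b c) (hcd : G.Adj c d) (hde : G.Adj d e) (hea : G.Adj e a)
    (hac : c ∉ closedNbr G a) (had : d ∉ closedNbr G a) (hbd : d ∉ closedNbr G b)
    (hbe : e ∉ closedNbr G b) (hce : e ∉ closedNbr G c) : False := by
  simp only [mem_closedNbr, not_or] at hac had hbd hbe hce
  have := hab.ne; have := hbc.ne; have := hcd.ne; have := hde.ne; have := hea.ne
  refine h5.false ⟨⟨![a, b, c, d, e], ?_⟩, ?_⟩
  · intro i j h
    fin_cases i <;> fin_cases j <;> simp_all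
  · intro i j
    show G.Adj (![a, b, c, d, e] i) (![a, b, c, d, e] j) ↔ _
    fin_cases i <;> fin_cases j <;>
      simp [hab, hbc, hcd, hde, hea, hab.symm, hbc.symm, hcd.symm, hde.symm, hea.symm,
        hac.2, had.2, hbd.2, hbe.2, hce.2, G.adj_comm c a, G.adj_comm d a, G.adj_comm d b,
        G.adj_comm e b, G.adj_comm e c] <;> decide

lemma exists_ne_mem_closedNbr_inter_of_mem_redVerts (hy : y ∈ redVerts G R)
    (hz : u ∈ closedNbr G y) : ∃ w ∈ closedNbr G u ∩ R, w ≠ y := by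
  by_contra! h
  refine Set.eq_empty_iff_forall_notMem.1 hy.2 u ⟨hz, Set.Subset.antisymm h ?_⟩
  rintro _ rfl
  exact ⟨mem_closedNbr_comm.1 hz, hy.1⟩

lemma exists_closedNbr_inter_eq_pair (hR : MinRedundant G R) (hx : x ∈ redVerts G R)
    (hyR : y ∈ R) (hyx : y ≠ x) : ∃ u ∈ closedNbr G x, closedNbr G u ∩ R = {x, y} := by
  have hIrr : Irred G (R \ {y}) := not_not.1 (hR.2 _ (Set.sdiff_singleton_ssubset.2 hyR))
  obtain ⟨u, hux, hu⟩ := hIrr x ⟨hx.1, hyx.symm⟩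
  rw [← Set.inter_sdiff_assoc] at hu
  have hyu : y ∈ closedNbr G u ∩ R := by
    by_contra hyu
    rw [Set.sdiff_singleton_eq_self hyu] at hu
    exact Set.eq_empty_iff_forall_notMem.1 hx.2 u ⟨hux, hu⟩
  refine ⟨u, hux, ?_⟩
  calc closedNbr G u ∩ R = insert y ((closedNbr G u ∩ R) \ {y}) :=
        (Set.insert_sdiff_self_of_mem hyu).symm
    _ = {x, y} := by rw [hu, Set.pair_comm]

lemma closedNbr_inter_eq_pair_iff (hxR : x ∈ R) (hyR : y ∈ R) (hadj : G.Adj x y) :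
    closedNbr G x ∩ R = {x, y} ↔ ¬(R ∩ (G.neighborSet x \ {y})).Nonempty := by
  rw [Set.not_nonempty_iff_eq_empty, Set.eq_empty_iff_forall_notMem, Set.ext_iff]
  simp only [Set.mem_inter_iff, Set.mem_sdiff, mem_closedNbr, mem_neighborSet,
    Set.mem_insert_iff, Set.mem_singleton_iff, not_and, not_not]
  constructor
  · rintro h v hvR hxv
    exact ((h v).1 ⟨Or.inr hxv, hvR⟩).resolve_left (G.ne_of_adj hxv).symm
  · intro h v
    constructor
    · rintro ⟨rfl | hxv, hvR⟩
      exacts [Or.inl rfl, Or.inr (h v hvR hxv)]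
    · rintro (rfl | rfl)
      exacts [⟨Or.inl rfl, hxR⟩, ⟨Or.inr hadj, hyR⟩]

lemma closedNbr_inter_eq_pair_or (h3 : CFree G 3) (hR : MinRedundant G R)
    (hx : x ∈ redVerts G R) (hyR : y ∈ R) (hadj : G.Adj x y) :
    closedNbr G x ∩ R = {x, y} ∨ closedNbr G y ∩ R = {y, x} := by
  obtain ⟨u, hux, hu⟩ := exists_closedNbr_inter_eq_pair hR hx hyR hadj.ne'
  rcases mem_closedNbr.1 hux with rfl | hxu
  · exact Or.inl hu
  rcases mem_closedNbr.1 (mem_of_inter_eq hu (by simp) : y ∈ closedNbr G u) with rfl | huy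
  · exact Or.inr (hu.trans (Set.pair_comm _ _))
  · exact (h3.false_of_triangle hxu huy hadj.symm).elim

lemma false_of_closedNbr_inter_eq_pair (h3 : CFree G 3) (h5 : CFree G 5)
    (hR : MinRedundant G R) (hx : x ∈ redVerts G R) (hy : y ∈ redVerts G R) (hadj : G.Adj x y)
    (hNx : closedNbr G x ∩ R = {x, y}) (hNy : closedNbr G y ∩ R = {y, x})
    (hwR : w ∈ R) (hwx : w ≠ x) (hwy : w ≠ y) : False := by
  obtain ⟨u, hux, hNu⟩ := exists_closedNbr_inter_eq_pair hR hx hwR hwx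
  obtain ⟨v, hvy, hNv⟩ := exists_closedNbr_inter_eq_pair hR hy hwR hwy
  have hwNx : w ∉ closedNbr G x := by rw [mem_iff_of_inter_eq hNx hwR]; simp [hwx, hwy]
  have hwNy : w ∉ closedNbr G y := by rw [mem_iff_of_inter_eq hNy hwR]; simp [hwx, hwy]
  have hyNu : y ∉ closedNbr G u := by
    rw [mem_iff_of_inter_eq hNu hy.1]; simp [hadj.ne', hwy.symm]
  have hxNv : x ∉ closedNbr G v := by
    rw [mem_iff_of_inter_eq hNv hx.1]; simp [hadj.ne, hwx.symm]
  have hwNu : w ∈ closedNbr G u := mem_of_inter_eq hNu (by simp)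
  have hwNv : w ∈ closedNbr G v := mem_of_inter_eq hNv (by simp)
  have hxu : G.Adj x u :=
    adj_of_mem_closedNbr_of_ne hux fun h => hyNu (h ▸ mem_closedNbr_of_adj hadj)
  have hyv : G.Adj y v :=
    adj_of_mem_closedNbr_of_ne hvy fun h => hxNv (h ▸ mem_closedNbr_of_adj hadj.symm)
  have huw : G.Adj u w := adj_of_mem_closedNbr_of_ne hwNu fun h => hwNx (h ▸ hux)
  have hvw : G.Adj v w := adj_of_mem_closedNbr_of_ne hwNv fun h => hwNy (h ▸ hvy)
  have hvNu : v ∉ closedNbr G u := by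
    rintro hvu
    rcases mem_closedNbr.1 hvu with rfl | huv
    · exact hxNv (mem_of_inter_eq hNu (by simp))
    · exact h3.false_of_triangle huv hvw huw.symm
  exact h5.false_of_pentagon hxu huw hvw.symm hyv.symm hadj.symm hwNx
    (fun h => hxNv (mem_closedNbr_comm.1 h)) hvNu hyNu (fun h => hwNy (mem_closedNbr_comm.1 h))

end

theorem stmt7_general (G : SimpleGraph V) (h3 : CFree G 3) (h5 : CFree G 5)
    (R : Set V) (hR : MinRedundant G R) (x : V) (hx : x ∈ redVerts G R)
    (y : V) (hyR : y ∈ R) (hadj : G.Adj x y) (hNy : G.neighborSet y ≠ {x}) :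
    (¬((R ∩ (G.neighborSet y \ {x})).Nonempty ∧ (R ∩ (G.neighborSet x \ {y})).Nonempty)) ∧
    (y ∈ redVerts G R →
      ((R ∩ (G.neighborSet y \ {x})).Nonempty ∨ (R ∩ (G.neighborSet x \ {y})).Nonempty)) := by
  have hi := closedNbr_inter_eq_pair_iff hyR hx.1 hadj.symm
  have hii := closedNbr_inter_eq_pair_iff hx.1 hyR hadj
  refine ⟨?_, fun hy => ?_⟩
  · have := closedNbr_inter_eq_pair_or h3 hR hx hyR hadj
    tauto
  · by_contra! hnone
    obtain ⟨z, hyz, hzx⟩ : ∃ z, G.Adj y z ∧ z ≠ x := by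
      by_contra! h
      exact hNy (Set.eq_singleton_iff_unique_mem.2 ⟨hadj.symm, h⟩)
    obtain ⟨w, ⟨hwz, hwR⟩, hwy⟩ :=
      exists_ne_mem_closedNbr_inter_of_mem_redVerts hy (mem_closedNbr_of_adj hyz)
    have hwx : w ≠ x := by
      rintro rfl
      rcases mem_closedNbr.1 hwz with rfl | hzw
      · exact hzx rfl
      · exact h3.false_of_triangle hadj hyz hzw
    exact false_of_closedNbr_inter_eq_pair h3 h5 hR hx hy hadj
      (hii.2 (Set.not_nonempty_iff_eq_empty.2 hnone.2))
      (hi.2 (Set.not_nonempty_iff_eq_empty.2 hnone.1)) hwR hwx hwy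

/-- in a `(C₃, C₅)`-free graph, for a minimal redundant set `R`,
`x ∈ red(R)`, and `y ∈ R` adjacent to `x` with `N(y) ≠ {x}`: at most one of
`R ∩ (N(y) \ {x}) ≠ ∅` and `R ∩ (N(x) \ {y}) ≠ ∅` holds; and if moreover
`y ∈ red(R)` then exactly one of them holds. -/
theorem stmt7 [Fintype V] (G : SimpleGraph V) (h3 : CFree G 3) (h5 : CFree G 5)
    (R : Set V) (hR : MinRedundant G R) (x : V) (hx : x ∈ redVerts G R)
    (y : V) (hyR : y ∈ R) (hadj : G.Adj x y) (hNy : G.neighborSet y ≠ {x}) :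
    (¬((R ∩ (G.neighborSet y \ {x})).Nonempty ∧ (R ∩ (G.neighborSet x \ {y})).Nonempty)) ∧
    (y ∈ redVerts G R →
      ((R ∩ (G.neighborSet y \ {x})).Nonempty ∨ (R ∩ (G.neighborSet x \ {y})).Nonempty)) :=
  stmt7_general G h3 h5 R hR x hx y hyR hadj hNy
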